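/- arXiv:1710.09272 — 9 statements merged into one kernel-verified Lean document; each statement's English description precedes it below -/
import Mathlib

section
/- Let X be a real vector space of finite dimension d and let P be a subset of X. Define conv_0(P) = P and, for each k, conv_{k+1}(P) = { (1-t)·p + t·p' : t ∈ [0,1], p, p' ∈ conv_k(P) }. Then conv_d(P) equals the convex hull of P. -/
/-!
One step of `convIter` is the convex join of the previous set with itself, so by induction
`convIter k P` contains the convex hull of every subset of `P` with at most `2 ^ k` points:
a set of at most `2 ^ (k + 1)` points is the union of two sets of at most `2 ^ k` points, and the
convex hull of a union of two nonempty sets is the convex join of their hulls. By Carathéodory's theorem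
every point of `convexHull ℝ P` lies in the convex hull of at most `d + 1 ≤ 2 ^ d` points of `P`.
-/

/-- The iterated "segments between pairs of points" operator:
`convIter 0 P = P` and
`convIter (k+1) P = {(1-t)•p + t•p' : t ∈ [0,1], p, p' ∈ convIter k P}`. -/
def convIter {X : Type*} [AddCommGroup X] [Module ℝ X] : ℕ → Set X → Set X
  | 0, P => P
  | (k + 1), P =>
      {x | ∃ t ∈ Set.Icc (0 : ℝ) 1, ∃ p ∈ convIter k P, ∃ p' ∈ convIter k P,
        x = (1 - t) • p + t • p'}

open Finset

theorem Finset.exists_nonempty_union_eq_of_card_le_two_mul {α : Type*} [DecidableEq α]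
    {t : Finset α} {m : ℕ} (hm : m < #t) (ht : #t ≤ 2 * m) :
    ∃ t₁ t₂ : Finset α, t₁.Nonempty ∧ t₂.Nonempty ∧ #t₁ ≤ m ∧ #t₂ ≤ m ∧ t₁ ∪ t₂ = t := by
  obtain ⟨t₁, ht₁, hcard₁⟩ := t.exists_subset_card_eq hm.le
  have hcard₂ : #(t \ t₁) = #t - m := by rw [card_sdiff_of_subset ht₁, hcard₁]
  refine ⟨t₁, t \ t₁, ?_, ?_, hcard₁.le, by omega, union_sdiff_of_subset ht₁⟩
  · rw [← card_pos]; omega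
  · rw [← card_pos]; omega

section convIter

variable {X : Type*} [AddCommGroup X] [Module ℝ X]

theorem convIter_succ (k : ℕ) (P : Set X) :
    convIter (k + 1) P = convexJoin ℝ (convIter k P) (convIter k P) := by
  ext x
  simp only [convIter, mem_convexJoin, segment_eq_image, Set.mem_image, Set.mem_ofPred_eq]
  constructor
  · rintro ⟨t, ht, p, hp, p', hp', rfl⟩
    exact ⟨p, hp, p', hp', t, ht, rfl⟩
  · rintro ⟨p, hp, p', hp', t, ht, rfl⟩
    exact ⟨t, ht, p, hp, p', hp', rfl⟩

theorem convIter_subset_succ (k : ℕ) (P : Set X) : convIter k P ⊆ convIter (k + 1) P := by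
  intro x hx
  rw [convIter_succ]
  exact subset_convexJoin_left ⟨x, hx⟩ hx

theorem convIter_subset_convexHull (k : ℕ) (P : Set X) : convIter k P ⊆ convexHull ℝ P := by
  induction k with
  | zero => exact subset_convexHull ℝ P
  | succ k ih =>
    rw [convIter_succ]
    exact convexJoin_subset ih ih (convex_convexHull ℝ P)

theorem convexHull_subset_convIter_of_card_le_two_pow (P : Set X) (k : ℕ) {t : Finset X}
    (htP : ↑t ⊆ P) (ht : #t ≤ 2 ^ k) : convexHull ℝ (t : Set X) ⊆ convIter k P := by
  induction k generalizing t with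
  | zero =>
    have hsub : (t : Set X).Subsingleton :=
      Set.subsingleton_coe _ |>.1 (card_le_one_iff_subsingleton_coe.1 ht)
    rw [hsub.convex.convexHull_eq]
    exact htP
  | succ k ih =>
    by_cases hsmall : #t ≤ 2 ^ k
    · exact (ih htP hsmall).trans (convIter_subset_succ k P)
    classical
    obtain ⟨t₁, t₂, hne₁, hne₂, hcard₁, hcard₂, rfl⟩ :=
      exists_nonempty_union_eq_of_card_le_two_mul (not_le.1 hsmall) (by rwa [← pow_succ'])
    rw [coe_union] at htP ⊢
    rw [convexHull_union hne₁.to_set hne₂.to_set, convIter_succ]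
    exact convexJoin_mono (ih (Set.union_subset_iff.1 htP).1 hcard₁)
      (ih (Set.union_subset_iff.1 htP).2 hcard₂)

end convIter

/-- If `X` is a real vector space of finite dimension `d`, then for any subset `P ⊆ X`,
`convIter d P` equals the convex hull of `P`. -/
theorem convIter_finrank_eq_convexHull {X : Type*} [AddCommGroup X] [Module ℝ X]
    [FiniteDimensional ℝ X] (P : Set X) :
    convIter (Module.finrank ℝ X) P = convexHull ℝ P := by
  refine (convIter_subset_convexHull _ P).antisymm ?_
  rw [convexHull_eq_union]
  simp only [Set.iUnion_subset_iff]
  intro t htP hindep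
  apply convexHull_subset_convIter_of_card_le_two_pow P _ htP
  calc #t = Fintype.card t := (Fintype.card_coe t).symm
    _ ≤ Module.finrank ℝ (vectorSpan ℝ (Set.range ((↑) : t → X))) + 1 :=
      hindep.card_le_finrank_succ
    _ ≤ Module.finrank ℝ X + 1 := by grw [Submodule.finrank_le]
    _ ≤ 2 ^ Module.finrank ℝ X := Nat.lt_two_pow_self
end

section
/- Let X be a finite-dimensional real vector space and U ⊆ X a set satisfying U ⊆ closure(interior U). Suppose U = ⋃_{i=1}^n U_i, where each U_i is the intersection of U with finitely many closed half-spaces of X. Let J = { j : interior(U_j) ≠ ∅ }. Then U = ⋃_{j∈J} U_j. -/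
/-- Let `X` be a finite-dimensional real vector space and `U ⊆ X` a set with
`U ⊆ closure (interior U)`. Suppose `U = ⋃_{i=1}^n U_i` where each `U_i` is the
intersection of `U` with finitely many closed half-spaces. Then `U` is the union of
those `U_j` having nonempty interior. -/
theorem union_of_pieces_with_nonempty_interior
    {X : Type*} [NormedAddCommGroup X] [NormedSpace ℝ X] [FiniteDimensional ℝ X]
    (n : ℕ) (U : Set X) (hUcl : U ⊆ closure (interior U))
    (Ui : Fin n → Set X)
    (hhalf : ∀ i, ∃ (m : ℕ) (f : Fin m → (X →ₗ[ℝ] ℝ)) (c : Fin m → ℝ),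
      (∀ j, f j ≠ 0) ∧ Ui i = U ∩ ⋂ j, {x | c j ≤ f j x})
    (hcover : U = ⋃ i, Ui i) :
    U = ⋃ i ∈ {j : Fin n | (interior (Ui j)).Nonempty}, Ui i := by
  classical
  choose m f c hf hC using hhalf
  set S : Set (Fin n) := {j : Fin n | (interior (Ui j)).Nonempty} with hS
  set C : Fin n → Set X := fun i => ⋂ j, {x | c i j ≤ f i j x} with hCdef
  have hCclosed : ∀ i, IsClosed (C i) := fun i =>
    isClosed_iInter fun j =>
      isClosed_le continuous_const (f i j).continuous_of_finiteDimensional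
  apply Set.Subset.antisymm
  · intro x hx
    by_contra hxn
    -- For every good index j, x is not in C j
    have hxC : ∀ j ∈ S, x ∉ C j := by
      intro j hj hxCj
      exact hxn (Set.mem_biUnion hj ((hC j).symm ▸ ⟨hx, hxCj⟩))
    set V : Set X := (⋃ j ∈ S, C j)ᶜ with hV
    have hVopen : IsOpen V :=
      ((Set.toFinite S).isClosed_biUnion fun j _ => hCclosed j).isOpen_compl
    have hxV : x ∈ V := by
      simp only [hV, Set.mem_compl_iff, Set.mem_iUnion]
      rintro ⟨j, hj, hxj⟩
      exact hxC j hj hxj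
    have hWne : (V ∩ interior U).Nonempty := by
      have := hUcl hx
      rw [mem_closure_iff] at this
      exact this V hVopen hxV
    set W : Set X := V ∩ interior U with hWdef
    have hWopen : IsOpen W := hVopen.inter isOpen_interior
    -- W is covered by the bad pieces
    have hWsub : ∀ y ∈ W, ∃ j, j ∉ S ∧ y ∈ Ui j := by
      intro y hy
      have hyU : y ∈ U := interior_subset hy.2
      rw [hcover] at hyU
      obtain ⟨j, hj⟩ := Set.mem_iUnion.mp hyU
      refine ⟨j, ?_, hj⟩
      intro hjS
      have : y ∈ C j := ((hC j) ▸ hj).2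
      exact (Set.mem_compl_iff _ _).mp hy.1 (Set.mem_biUnion hjS this)
    -- frontiers are nowhere dense, so their complements are dense
    have hD : Dense (⋂ i, (frontier (C i))ᶜ) :=
      dense_iInter_of_isOpen (fun i => isClosed_frontier.isOpen_compl)
        (fun i => interior_eq_empty_iff_dense_compl.mp (interior_frontier (hCclosed i)))
    obtain ⟨y, hyD, hyW⟩ := hD.exists_mem_open hWopen hWne
    obtain ⟨j, hjS, hyUj⟩ := hWsub y hyW
    have hyC : y ∈ C j := ((hC j) ▸ hyUj).2
    have hyint : y ∈ interior (C j) := by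
      have hnf : y ∉ frontier (C j) := Set.mem_iInter.mp hyD j
      rw [(hCclosed j).frontier_eq] at hnf
      by_contra h
      exact hnf ⟨hyC, h⟩
    refine hjS ⟨y, ?_⟩
    have hsub : interior (C j) ∩ W ⊆ Ui j := by
      intro z hz
      rw [hC j]
      exact ⟨interior_subset hz.2.2, interior_subset hz.1⟩
    exact interior_maximal hsub (isOpen_interior.inter hWopen) ⟨hyint, hyW⟩
  · refine Set.iUnion₂_subset fun i _ => ?_
    rw [hcover]
    exact Set.subset_iUnion Ui i
end

section
/- Let A be a finite-dimensional real affine space, k ∈ ℕ*, and D_1, …, D_k closed half-spaces of A with bounding hyperplanes M_1, …, M_k. If the intersection ⋂_{i=1}^k D_i is nonempty, then there exists a (possibly empty) subset J ⊆ {1,…,k} such that the affine span of ⋂_{i=1}^k D_i equals ⋂_{j∈J} M_j (with the convention that the empty intersection is A). -/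
/-- Let `A` be a finite-dimensional real affine space and `D_1, …, D_k` closed half-spaces
of `A` with bounding hyperplanes `M_1, …, M_k` (given by nonconstant affine forms `f i`
via `D_i = {x | c i ≤ f i x}` and `M_i = {x | f i x = c i}`). If `⋂ D_i` is nonempty,
then there is a subset `J ⊆ {1,…,k}` with
`affineSpan (⋂ D_i) = ⋂_{j ∈ J} M_j` (the empty intersection being all of `A`). -/
theorem affineSpan_inter_halfspaces_eq_inter_hyperplanes
    {V A : Type*} [AddCommGroup V] [Module ℝ V] [FiniteDimensional ℝ V]
    [AddTorsor V A] (k : ℕ) (hk : 0 < k)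
    (f : Fin k → (A →ᵃ[ℝ] ℝ)) (c : Fin k → ℝ)
    (hf : ∀ i, (f i).linear ≠ 0)
    (hne : (⋂ i, {x : A | c i ≤ f i x}).Nonempty) :
    ∃ J : Finset (Fin k),
      (affineSpan ℝ (⋂ i, {x : A | c i ≤ f i x}) : Set A)
        = ⋂ j ∈ J, {x : A | f j x = c j} := by
  classical
  set S : Set A := ⋂ i, {x : A | c i ≤ f i x} with hS
  have hmemS : ∀ {x : A}, x ∈ S ↔ ∀ i, c i ≤ f i x := by
    intro x; simp [hS, Set.mem_iInter]
  have hmidR : ∀ a b : ℝ, midpoint ℝ a b = (a + b) / 2 := by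
    intro a b; rw [midpoint_eq_smul_add, smul_eq_mul, invOf_eq_inv]; ring
  have hmid : ∀ x ∈ S, ∀ y ∈ S, midpoint ℝ x y ∈ S := by
    intro x hx y hy
    rw [hmemS] at hx hy ⊢
    intro i
    rw [(f i).map_midpoint x y, hmidR]
    linarith [hx i, hy i]
  set J : Finset (Fin k) := Finset.univ.filter (fun i => ∀ x ∈ S, f i x = c i) with hJ
  have hJmem : ∀ {i}, i ∈ J ↔ ∀ x ∈ S, f i x = c i := by
    intro i; simp [hJ]
  refine ⟨J, ?_⟩
  -- find an interior-like point y of S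
  have key : ∀ T : Finset (Fin k), ∃ y ∈ S, ∀ i ∈ T, i ∉ J → c i < f i y := by
    intro T
    induction T using Finset.induction_on with
    | empty => obtain ⟨y, hy⟩ := hne; exact ⟨y, hy, by simp⟩
    | @insert a T ha ih =>
      obtain ⟨y, hyS, hy⟩ := ih
      by_cases haJ : a ∈ J
      · refine ⟨y, hyS, ?_⟩
        intro i hi hiJ
        rcases Finset.mem_insert.mp hi with h | h
        · exact absurd (h ▸ haJ) hiJ
        · exact hy i h hiJ
      · have : ∃ z ∈ S, f a z ≠ c a := by
          by_contra h
          push_neg at h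
          exact haJ (hJmem.mpr h)
        obtain ⟨z, hzS, hz⟩ := this
        have hzlt : c a < f a z := lt_of_le_of_ne (hmemS.mp hzS a) (Ne.symm hz)
        refine ⟨midpoint ℝ y z, hmid y hyS z hzS, ?_⟩
        intro i hi hiJ
        rw [(f i).map_midpoint, hmidR]
        rcases Finset.mem_insert.mp hi with h | h
        · subst h
          linarith [hmemS.mp hyS i]
        · linarith [hy i h hiJ, hmemS.mp hzS i]
  obtain ⟨y, hyS, hy⟩ := key Finset.univ
  have hy' : ∀ i, i ∉ J → c i < f i y := fun i hi => hy i (Finset.mem_univ i) hi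
  apply Set.Subset.antisymm
  · -- affineSpan S ⊆ ⋂ M_j
    apply Set.subset_iInter₂
    intro j hj
    have hcarrier : (AffineSubspace.comap (f j) (AffineSubspace.mk' (c j) (⊥ : Submodule ℝ ℝ)) : Set A)
        = {x : A | f j x = c j} := by
      ext x
      simp [AffineSubspace.mem_comap, AffineSubspace.mem_mk', vsub_eq_sub,
        sub_eq_zero]
    rw [← hcarrier]
    have : affineSpan ℝ S ≤ AffineSubspace.comap (f j) (AffineSubspace.mk' (c j) ⊥) := by
      rw [affineSpan_le, hcarrier]
      intro x hx
      exact hJmem.mp hj x hx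
    exact this
  · -- ⋂ M_j ⊆ affineSpan S
    intro x hx
    simp only [Set.mem_iInter] at hx
    have hxJ : ∀ j ∈ J, f j x = c j := fun j hj => hx j hj
    -- find small t > 0 with lineMap y x t ∈ S
    have hev : ∀ i : Fin k, ∀ᶠ t : ℝ in nhdsWithin 0 (Set.Ioi 0),
        c i ≤ f i (AffineMap.lineMap y x t) := by
      intro i
      by_cases hiJ : i ∈ J
      · filter_upwards with t
        rw [(f i).apply_lineMap]
        have h1 : f i y = c i := hJmem.mp hiJ y hyS
        have h2 : f i x = c i := hxJ i hiJ
        simp [AffineMap.lineMap_apply, h1, h2, vsub_eq_sub]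
      · have hlt : c i < f i y := hy' i hiJ
        have hcont : Filter.Tendsto (fun t : ℝ => f i y + t * (f i x - f i y))
            (nhdsWithin 0 (Set.Ioi 0)) (nhds (f i y)) := by
          have : Filter.Tendsto (fun t : ℝ => f i y + t * (f i x - f i y)) (nhds 0)
              (nhds (f i y + 0 * (f i x - f i y))) := by
            apply Filter.Tendsto.const_add
            exact (continuous_id.mul continuous_const).tendsto 0
          simpa using this.mono_left nhdsWithin_le_nhds
        have hmem : ∀ᶠ t : ℝ in nhdsWithin 0 (Set.Ioi 0),
            c i ≤ f i y + t * (f i x - f i y) :=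
          hcont.eventually_const_le hlt
        filter_upwards [hmem] with t ht
        rw [(f i).apply_lineMap]
        simpa [AffineMap.lineMap_apply, vsub_eq_sub, smul_eq_mul] using by
          calc c i ≤ f i y + t * (f i x - f i y) := ht
            _ = t * (f i x - f i y) + f i y := by ring
    have hall : ∀ᶠ t : ℝ in nhdsWithin 0 (Set.Ioi 0),
        AffineMap.lineMap y x t ∈ S := by
      have := Filter.eventually_all.mpr hev
      filter_upwards [this] with t ht
      exact hmemS.mpr ht
    have : ∃ t : ℝ, 0 < t ∧ AffineMap.lineMap y x t ∈ S := by
      have := (hall.and (eventually_mem_nhdsWithin (a := (0:ℝ)) (s := Set.Ioi 0))).exists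
      obtain ⟨t, h1, h2⟩ := this
      exact ⟨t, h2, h1⟩
    obtain ⟨t, ht, htS⟩ := this
    -- x = lineMap y (lineMap y x t) t⁻¹
    have hxeq : x = AffineMap.lineMap y (AffineMap.lineMap y x t) t⁻¹ := by
      rw [AffineMap.lineMap_apply, AffineMap.lineMap_apply, vadd_vsub, smul_smul,
        inv_mul_cancel₀ (ne_of_gt ht), one_smul, vsub_vadd]
    rw [hxeq]
    have h1 : y ∈ affineSpan ℝ S := mem_affineSpan ℝ hyS
    have h2 : AffineMap.lineMap y x t ∈ affineSpan ℝ S := mem_affineSpan ℝ htS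
    rw [AffineMap.lineMap_apply]
    exact AffineSubspace.smul_vsub_vadd_mem _ t⁻¹ h2 h1 h1
end

section
/- Let C be a closed convex subset of ℝ^n with 0 in its interior, j its gauge, U = { x : j(x) ≠ 0 }, and Fr(x) = x / j(x). Suppose V ⊆ U is a nonempty open set and M is an affine hyperplane of ℝ^n with Fr(V) ⊆ M. Then 0 ∉ M, the set Fr(V) equals (ℝ_{>0}·V) ∩ M and is open in M, and C is contained in one of the two closed half-spaces bounded by M. -/
open Topology Filter Metric Set Pointwise


/-- Let `C ⊆ ℝ^n` be closed convex with `0 ∈ interior C`, `j = gauge C`,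
`U = {x | gauge C x ≠ 0}` and `Fr x = (gauge C x)⁻¹ • x`. If `V ⊆ U` is a nonempty open
set and `M = {x | f x = k}` (with `f` a nonzero linear form) is an affine hyperplane with
`Fr(V) ⊆ M`, then `0 ∉ M`, `Fr(V) = (ℝ_{>0} • V) ∩ M` and this set is open in `M`, and
`C` lies in one of the two closed half-spaces bounded by `M`. -/
theorem gauge_frontier_in_hyperplane
    {n : ℕ} (C : Set (EuclideanSpace ℝ (Fin n)))
    (hclosed : IsClosed C) (hconv : Convex ℝ C)
    (h0 : (0 : EuclideanSpace ℝ (Fin n)) ∈ interior C)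
    (V : Set (EuclideanSpace ℝ (Fin n))) (hVopen : IsOpen V) (hVne : V.Nonempty)
    (hVU : V ⊆ {x | gauge C x ≠ 0})
    (f : EuclideanSpace ℝ (Fin n) →ₗ[ℝ] ℝ) (hf : f ≠ 0) (k : ℝ)
    (hFrV : (fun x => (gauge C x)⁻¹ • x) '' V ⊆ {x | f x = k}) :
    (0 : EuclideanSpace ℝ (Fin n)) ∉ {x : EuclideanSpace ℝ (Fin n) | f x = k} ∧
      (fun x => (gauge C x)⁻¹ • x) '' V
        = {y | ∃ r : ℝ, 0 < r ∧ ∃ v ∈ V, y = r • v} ∩ {x | f x = k} ∧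
      IsOpen {y : {x : EuclideanSpace ℝ (Fin n) // f x = k} |
        (y : EuclideanSpace ℝ (Fin n)) ∈ (fun x => (gauge C x)⁻¹ • x) '' V} ∧
      (C ⊆ {x | f x ≤ k} ∨ C ⊆ {x | k ≤ f x}) := by
  have hC0 : C ∈ 𝓝 (0 : EuclideanSpace ℝ (Fin n)) := mem_interior_iff_mem_nhds.mp h0
  have hgpos : ∀ v ∈ V, 0 < gauge C v := fun v hv =>
    (gauge_nonneg v).lt_of_ne (Ne.symm (hVU hv))
  have hFrk : ∀ v ∈ V, f ((gauge C v)⁻¹ • v) = k := fun v hv => hFrV ⟨v, hv, rfl⟩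
  have hfv : ∀ v ∈ V, f v = gauge C v * k := by
    intro v hv
    have h1 := hFrk v hv
    rw [map_smul, smul_eq_mul] at h1
    field_simp at h1
    rw [div_eq_iff (hVU hv)] at h1
    rw [h1, mul_comm]
  -- k ≠ 0
  have hk : k ≠ 0 := by
    intro hk0
    apply hf
    have hker : ∀ v ∈ V, v ∈ LinearMap.ker f := by
      intro v hv
      simp [LinearMap.mem_ker, hfv v hv, hk0]
    obtain ⟨v₀, hv₀⟩ := hVne
    have hsub : V ⊆ (LinearMap.ker f : Set (EuclideanSpace ℝ (Fin n))) := fun v hv => hker v hv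
    have : LinearMap.ker f = ⊤ := by
      apply Submodule.eq_top_of_nonempty_interior'
      exact ⟨v₀, interior_mono hsub (by rwa [hVopen.interior_eq])⟩
    rwa [LinearMap.ker_eq_top] at this
  have h0M : (0 : EuclideanSpace ℝ (Fin n)) ∉ {x : EuclideanSpace ℝ (Fin n) | f x = k} := by
    simp [Ne.symm hk]
  -- the equality
  have heq : (fun x => (gauge C x)⁻¹ • x) '' V
      = {y | ∃ r : ℝ, 0 < r ∧ ∃ v ∈ V, y = r • v} ∩ {x | f x = k} := by
    ext y
    constructor
    · rintro ⟨v, hv, rfl⟩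
      exact ⟨⟨(gauge C v)⁻¹, inv_pos.2 (hgpos v hv), v, hv, rfl⟩, hFrk v hv⟩
    · rintro ⟨⟨r, hr, v, hv, rfl⟩, hy⟩
      refine ⟨v, hv, ?_⟩
      have h1 : f (r • v) = k := hy
      rw [map_smul, smul_eq_mul, hfv v hv] at h1
      have h2 : r * gauge C v = 1 :=
        mul_right_cancel₀ hk (by rw [one_mul, mul_assoc]; exact h1)
      have h3 : r = (gauge C v)⁻¹ := eq_inv_of_mul_eq_one_left (by linarith [h2, mul_comm r (gauge C v)])
      rw [h3]
  -- the cone is open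
  have hSopen : IsOpen {y : EuclideanSpace ℝ (Fin n) | ∃ r : ℝ, 0 < r ∧ ∃ v ∈ V, y = r • v} := by
    have hS : {y : EuclideanSpace ℝ (Fin n) | ∃ r : ℝ, 0 < r ∧ ∃ v ∈ V, y = r • v}
        = ⋃ r : {r : ℝ // 0 < r}, (r : ℝ) • V := by
      ext y
      simp only [Set.mem_setOf_eq, Set.mem_iUnion, Set.mem_smul_set, Subtype.exists]
      constructor
      · rintro ⟨r, hr, v, hv, rfl⟩; exact ⟨r, hr, v, hv, rfl⟩
      · rintro ⟨r, hr, v, hv, rfl⟩; exact ⟨r, hr, v, hv, rfl⟩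
    rw [hS]
    exact isOpen_iUnion fun r => hVopen.smul₀ (ne_of_gt r.2)
  have hopen3 : IsOpen {y : {x : EuclideanSpace ℝ (Fin n) // f x = k} |
      (y : EuclideanSpace ℝ (Fin n)) ∈ (fun x => (gauge C x)⁻¹ • x) '' V} := by
    have hset : {y : {x : EuclideanSpace ℝ (Fin n) // f x = k} |
        (y : EuclideanSpace ℝ (Fin n)) ∈ (fun x => (gauge C x)⁻¹ • x) '' V}
        = Subtype.val ⁻¹' {y : EuclideanSpace ℝ (Fin n) | ∃ r : ℝ, 0 < r ∧ ∃ v ∈ V, y = r • v} := by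
      ext y
      simp only [Set.mem_setOf_eq, Set.mem_preimage, heq, Set.mem_inter_iff]
      exact ⟨fun h => h.1, fun h => ⟨h, y.2⟩⟩
    rw [hset]
    exact hSopen.preimage continuous_subtype_val
  -- key claim: no point of C scales into M from inside the open segment
  have key : ∀ c ∈ C, ∀ t : ℝ, 0 < t → t < 1 → f (t • c) ≠ k := by
    intro c hc t ht0 ht1 hftc
    set p : EuclideanSpace ℝ (Fin n) := t • c with hp
    have hpint : p ∈ interior C := by
      have := hconv.combo_interior_self_mem_interior h0 hc (a := 1 - t) (b := t)
        (by linarith) ht0.le (by ring)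
      simpa [hp] using this
    obtain ⟨v₀, hv₀⟩ := hVne
    set x₀ : EuclideanSpace ℝ (Fin n) := (gauge C v₀)⁻¹ • v₀ with hx₀
    have hx₀g : gauge C x₀ = 1 := by
      rw [hx₀, gauge_smul_of_nonneg (inv_nonneg.2 (hgpos v₀ hv₀).le), smul_eq_mul,
        inv_mul_cancel₀ (hVU hv₀)]
    have hx₀C : x₀ ∈ C := by
      have : x₀ ∈ closure C := (gauge_le_one_iff_mem_closure hconv hC0).1 hx₀g.le
      rwa [hclosed.closure_eq] at this
    have hx₀S : x₀ ∈ {y : EuclideanSpace ℝ (Fin n) | ∃ r : ℝ, 0 < r ∧ ∃ v ∈ V, y = r • v} :=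
      ⟨(gauge C v₀)⁻¹, inv_pos.2 (hgpos v₀ hv₀), v₀, hv₀, rfl⟩
    obtain ⟨ε, hε, hball⟩ := Metric.isOpen_iff.1 hSopen x₀ hx₀S
    set s : ℝ := min (1/2) (ε / (‖p - x₀‖ + 1)) with hs
    have hnorm : (0:ℝ) < ‖p - x₀‖ + 1 := by positivity
    have hs0 : 0 < s := lt_min (by norm_num) (div_pos hε hnorm)
    have hs1 : s < 1 := lt_of_le_of_lt (min_le_left _ _) (by norm_num)
    set z : EuclideanSpace ℝ (Fin n) := s • p + (1 - s) • x₀ with hz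
    have hzint : z ∈ interior C :=
      hconv.combo_interior_self_mem_interior hpint hx₀C hs0 (by linarith) (by ring)
    have hfz : f z = k := by
      have hfp : f p = k := hftc
      have hfx₀ : f x₀ = k := hFrk v₀ hv₀
      simp [hz, map_add, map_smul, smul_eq_mul, hfp, hfx₀]
      ring
    have hdist : dist z x₀ < ε := by
      have hzx : z - x₀ = s • (p - x₀) := by
        rw [hz]
        module
      rw [dist_eq_norm, hzx, norm_smul, Real.norm_eq_abs, abs_of_pos hs0]
      have hsle : s ≤ ε / (‖p - x₀‖ + 1) := min_le_right _ _
      calc s * ‖p - x₀‖ ≤ (ε / (‖p - x₀‖ + 1)) * ‖p - x₀‖ := by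
            apply mul_le_mul_of_nonneg_right hsle (norm_nonneg _)
        _ < ε := by
            rw [div_mul_eq_mul_div, div_lt_iff₀ hnorm]
            nlinarith [norm_nonneg (p - x₀)]
    have hzS : z ∈ {y : EuclideanSpace ℝ (Fin n) | ∃ r : ℝ, 0 < r ∧ ∃ v ∈ V, y = r • v} :=
      hball (Metric.mem_ball.2 hdist)
    have hzimg : z ∈ (fun x => (gauge C x)⁻¹ • x) '' V := by
      rw [heq]; exact ⟨hzS, hfz⟩
    obtain ⟨w, hw, hwz⟩ := hzimg
    have hzg : gauge C z = 1 := by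
      rw [← hwz, gauge_smul_of_nonneg (inv_nonneg.2 (hgpos w hw).le), smul_eq_mul,
        inv_mul_cancel₀ (hVU hw)]
    have : gauge C z < 1 := interior_subset_gauge_lt_one C hzint
    rw [hzg] at this
    exact lt_irrefl 1 this
  refine ⟨h0M, heq, hopen3, ?_⟩
  rcases lt_or_gt_of_ne hk with hkneg | hkpos
  · right
    intro c hc
    by_contra h
    simp only [Set.mem_setOf_eq, not_le] at h
    have hfc : f c < 0 := h.trans hkneg
    have ht0 : 0 < k / f c := div_pos_of_neg_of_neg hkneg hfc
    have ht1 : k / f c < 1 := by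
      rw [div_lt_one_of_neg hfc]
      exact h
    exact key c hc (k / f c) ht0 ht1
      (by rw [map_smul, smul_eq_mul, div_mul_cancel₀ k (ne_of_lt hfc)])
  · left
    intro c hc
    by_contra h
    simp only [Set.mem_setOf_eq, not_le] at h
    have hfc : 0 < f c := hkpos.trans h
    have ht0 : 0 < k / f c := div_pos hkpos hfc
    have ht1 : k / f c < 1 := (div_lt_one hfc).2 h
    exact key c hc (k / f c) ht0 ht1
      (by rw [map_smul, smul_eq_mul, div_mul_cancel₀ k (ne_of_gt hfc)])
end

section
/- Let C be a closed convex subset of ℝ^n with 0 in its interior, j its gauge, U = { x : j(x) ≠ 0 }, and Fr(x) = x / j(x). Let V ⊆ U be a nonempty open set and M, M' two affine hyperplanes of ℝ^n such that Fr(V) ⊆ M and Fr(V) ⊆ M'. Then M = M'. -/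
/-- A linear form vanishing on a nonempty open set is zero. -/
lemma linear_form_zero_of_vanish_on_open {n : ℕ}
    (g : EuclideanSpace ℝ (Fin n) →ₗ[ℝ] ℝ)
    {V : Set (EuclideanSpace ℝ (Fin n))} (hVopen : IsOpen V) (hVne : V.Nonempty)
    (h : ∀ x ∈ V, g x = 0) : g = 0 := by
  obtain ⟨x₀, hx₀⟩ := hVne
  obtain ⟨ε, hε, hball⟩ := Metric.isOpen_iff.1 hVopen x₀ hx₀
  ext v
  set t : ℝ := ε / (2 * (‖v‖ + 1)) with ht
  have hvpos : (0:ℝ) < ‖v‖ + 1 := by positivity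
  have htpos : 0 < t := by positivity
  have hmem : x₀ + t • v ∈ V := by
    apply hball
    rw [Metric.mem_ball, dist_eq_norm]
    have : x₀ + t • v - x₀ = t • v := by abel
    rw [this, norm_smul, Real.norm_eq_abs, abs_of_pos htpos]
    calc t * ‖v‖ ≤ t * (‖v‖ + 1) := by nlinarith
      _ = ε / 2 := by rw [ht]; field_simp
      _ < ε := by linarith
  have h1 := h _ hmem
  have h2 := h _ hx₀
  rw [map_add, h2, map_smul, smul_eq_mul, zero_add] at h1
  have := mul_eq_zero.1 h1
  rcases this with h | h
  · exact absurd h (ne_of_gt htpos)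
  · simpa using h

/-- Let `C ⊆ ℝ^n` be closed convex with `0 ∈ interior C`, `U = {x | gauge C x ≠ 0}`,
`Fr x = (gauge C x)⁻¹ • x`. If `V ⊆ U` is nonempty open and `M = {x | f x = k}`,
`M' = {x | f' x = k'}` are affine hyperplanes (nonzero linear forms `f`, `f'`) both
containing `Fr(V)`, then `M = M'`. -/
theorem hyperplane_containing_gauge_frontier_unique
    {n : ℕ} (C : Set (EuclideanSpace ℝ (Fin n)))
    (hclosed : IsClosed C) (hconv : Convex ℝ C)
    (h0 : (0 : EuclideanSpace ℝ (Fin n)) ∈ interior C)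
    (V : Set (EuclideanSpace ℝ (Fin n))) (hVopen : IsOpen V) (hVne : V.Nonempty)
    (hVU : V ⊆ {x | gauge C x ≠ 0})
    (f f' : EuclideanSpace ℝ (Fin n) →ₗ[ℝ] ℝ) (hf : f ≠ 0) (hf' : f' ≠ 0) (k k' : ℝ)
    (hM : (fun x => (gauge C x)⁻¹ • x) '' V ⊆ {x | f x = k})
    (hM' : (fun x => (gauge C x)⁻¹ • x) '' V ⊆ {x | f' x = k'}) :
    {x : EuclideanSpace ℝ (Fin n) | f x = k} = {x | f' x = k'} := by
  have key : ∀ x ∈ V, f x = k * gauge C x ∧ f' x = k' * gauge C x := by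
    intro x hx
    have hg : gauge C x ≠ 0 := hVU hx
    have h1 : f ((gauge C x)⁻¹ • x) = k := hM ⟨x, hx, rfl⟩
    have h2 : f' ((gauge C x)⁻¹ • x) = k' := hM' ⟨x, hx, rfl⟩
    rw [map_smul, smul_eq_mul] at h1 h2
    constructor
    · field_simp at h1; linarith
    · field_simp at h2; linarith
  have hk : k ≠ 0 := by
    intro hk0
    apply hf
    apply linear_form_zero_of_vanish_on_open f hVopen hVne
    intro x hx
    rw [(key x hx).1, hk0, zero_mul]
  have hk' : k' ≠ 0 := by
    intro hk0
    apply hf'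
    apply linear_form_zero_of_vanish_on_open f' hVopen hVne
    intro x hx
    rw [(key x hx).2, hk0, zero_mul]
  have hprop : k' • f - k • f' = 0 := by
    apply linear_form_zero_of_vanish_on_open _ hVopen hVne
    intro x hx
    obtain ⟨h1, h2⟩ := key x hx
    simp only [LinearMap.sub_apply, LinearMap.smul_apply, smul_eq_mul, h1, h2]
    ring
  have hprop' : ∀ x, k' * f x = k * f' x := by
    intro x
    have := congrFun (congrArg (DFunLike.coe) hprop) x
    simp only [LinearMap.sub_apply, LinearMap.smul_apply, smul_eq_mul,
      LinearMap.zero_apply] at this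
    linarith
  ext x
  simp only [Set.mem_setOf_eq]
  constructor
  · intro hx
    have := hprop' x
    rw [hx] at this
    exact (mul_left_cancel₀ hk (by linarith)).symm
  · intro hx
    have := hprop' x
    rw [hx] at this
    exact mul_left_cancel₀ hk' (by linarith)
end

section
/- Let C = ⋂_{i=1}^k D_i be an intersection of closed half-spaces of ℝ^n with 0 in the interior of C, let j be the gauge of C, U = { x : j(x) ≠ 0 }, and Fr(x) = x / j(x). Fix j_0 ∈ {1,…,k} with bounding hyperplane M_{j_0} of D_{j_0}, and suppose that for every nonempty open subset V of U one has Fr(V) ⊄ M_{j_0}. Then C = ⋂_{i ≠ j_0} D_i, i.e. the half-space D_{j_0} is redundant. -/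
/-!
Let `C'` be the intersection of the other half-spaces and suppose `x ∈ C' \ D_{j₀}`. On
`V = {f j₀ < c j₀} ∩ interior C'` only the `j₀`-th constraint binds along rays from `0`, since `C'`
is star-convex about `0`; hence `gauge C y = f j₀ y / c j₀ > 1` and `Fr y ∈ M_{j₀}` there. `V` is
open, and nonempty because `x` lies in the closure of the interior of the convex body `C'`.
-/

open Set Filter Topology

section HalfSpace

variable {E : Type*} [AddCommGroup E] [Module ℝ E] {f : E →ₗ[ℝ] ℝ} {c : ℝ}

theorem neg_of_halfSpace_mem_nhds_zero [TopologicalSpace E] [ContinuousSMul ℝ E]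
    (h0 : {x | c ≤ f x} ∈ 𝓝 (0 : E)) {x : E} (hx : f x < c) : c < 0 := by
  have hc : c ≤ 0 := by simpa using mem_of_mem_nhds h0
  have hsmul : Tendsto (fun t : ℝ => t • x) (𝓝[>] 0) (𝓝 0) :=
    ((continuous_id.smul continuous_const).tendsto' 0 0 (zero_smul ℝ x)).mono_left
      nhdsWithin_le_nhds
  obtain ⟨t, htx, ht⟩ := ((hsmul.eventually h0).and self_mem_nhdsWithin).exists
  simp only [map_smul, smul_eq_mul] at htx
  nlinarith [show 0 < t from ht]

theorem gauge_halfSpace_inter_eq_div {s : Set E} (hs : StarConvex ℝ 0 s) (hc : c < 0) {y : E}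
    (hys : y ∈ s) (hy : f y < c) : gauge ({x | c ≤ f x} ∩ s) y = f y / c := by
  have ht : 1 < f y / c := (one_lt_div_of_neg hc).2 hy
  have hscaled : (f y / c)⁻¹ • y ∈ {x | c ≤ f x} ∩ s := by
    refine ⟨?_, hs.smul_mem hys (by positivity) (inv_le_one_of_one_le₀ ht.le)⟩
    rw [mem_ofPred_eq, map_smul, smul_eq_mul, inv_div, div_mul_cancel₀ _ (hy.trans hc).ne]
  refine le_antisymm (gauge_le_of_mem (by linarith) ?_) ?_
  · rwa [mem_smul_set_iff_inv_smul_mem₀ (by linarith)]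
  · rw [gauge_def']
    refine le_csInf ⟨f y / c, zero_lt_one.trans ht, hscaled⟩ ?_
    rintro r ⟨hr, hrD, -⟩
    rw [mem_ofPred_eq, map_smul, smul_eq_mul, le_inv_mul_iff₀ hr] at hrD
    rw [div_le_iff_of_neg hc]
    linarith

variable [TopologicalSpace E] [IsTopologicalAddGroup E] [ContinuousSMul ℝ E]

theorem Convex.inter_interior_nonempty_of_isOpen {s o : Set E} (hs : Convex ℝ s)
    (hint : (interior s).Nonempty) (ho : IsOpen o) (hso : (o ∩ s).Nonempty) :
    (o ∩ interior s).Nonempty := by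
  obtain ⟨x, hxo, hxs⟩ := hso
  have hx : x ∈ closure (interior s) := by
    rw [hs.closure_interior_eq_closure_of_nonempty_interior hint]
    exact subset_closure hxs
  exact mem_closure_iff.1 hx o ho hxo

theorem exists_isOpen_gauge_frontier_subset_hyperplane (hf : Continuous f) {s : Set E}
    (hs : Convex ℝ s) (h0 : (0 : E) ∈ interior ({x | c ≤ f x} ∩ s)) {x : E} (hxs : x ∈ s)
    (hx : f x < c) :
    ∃ V : Set E, IsOpen V ∧ V.Nonempty ∧ V ⊆ {y | gauge ({x | c ≤ f x} ∩ s) y ≠ 0} ∧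
      (fun y => (gauge ({x | c ≤ f x} ∩ s) y)⁻¹ • y) '' V ⊆ {y | f y = c} := by
  have hc : c < 0 :=
    neg_of_halfSpace_mem_nhds_zero (mem_of_superset (mem_interior_iff_mem_nhds.1 h0)
      inter_subset_left) hx
  have hstar : StarConvex ℝ 0 s := hs.starConvex (interior_subset h0).2
  have hopen : IsOpen {y | f y < c} := isOpen_lt hf continuous_const
  refine ⟨{y | f y < c} ∩ interior s, hopen.inter isOpen_interior,
    hs.inter_interior_nonempty_of_isOpen ⟨0, interior_mono inter_subset_right h0⟩ hopen
      ⟨x, hx, hxs⟩, ?_, ?_⟩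
  · rintro y ⟨hy, hys⟩
    rw [mem_ofPred_eq, gauge_halfSpace_inter_eq_div hstar hc (interior_subset hys) hy]
    exact (div_pos_of_neg_of_neg (hy.trans hc) hc).ne'
  · rintro _ ⟨y, ⟨hy, hys⟩, rfl⟩
    beta_reduce
    rw [mem_ofPred_eq, gauge_halfSpace_inter_eq_div hstar hc (interior_subset hys) hy, map_smul,
      smul_eq_mul, inv_div, div_mul_cancel₀ _ (hy.trans hc).ne]

end HalfSpace

theorem redundant_halfspace_of_gauge_frontier_general
    {n k : ℕ} (f : Fin k → (EuclideanSpace ℝ (Fin n) →ₗ[ℝ] ℝ)) (c : Fin k → ℝ)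
    (C : Set (EuclideanSpace ℝ (Fin n))) (hC : C = ⋂ i, {x | c i ≤ f i x})
    (h0 : (0 : EuclideanSpace ℝ (Fin n)) ∈ interior C)
    (j₀ : Fin k)
    (hnot : ∀ V : Set (EuclideanSpace ℝ (Fin n)), IsOpen V → V.Nonempty →
      V ⊆ {x | gauge C x ≠ 0} →
      ¬ ((fun x => (gauge C x)⁻¹ • x) '' V ⊆ {x | f j₀ x = c j₀})) :
    C = ⋂ i ∈ {i : Fin k | i ≠ j₀}, {x | c i ≤ f i x} := by
  have hsplit : C = {x | c j₀ ≤ f j₀ x} ∩ ⋂ i ∈ {i : Fin k | i ≠ j₀}, {x | c i ≤ f i x} := by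
    ext x
    simp only [hC, mem_iInter, mem_inter_iff, mem_ofPred_eq]
    exact ⟨fun h => ⟨h j₀, fun i _ => h i⟩,
      fun h i => if hi : i = j₀ then hi ▸ h.1 else h.2 i hi⟩
  refine subset_antisymm (hsplit ▸ inter_subset_right) fun x hx => ?_
  by_contra hxC
  have hxj : f j₀ x < c j₀ := not_le.1 fun h => hxC (hsplit ▸ ⟨h, hx⟩)
  rw [hsplit] at h0 hnot
  obtain ⟨V, hVo, hVne, hVU, hVM⟩ := exists_isOpen_gauge_frontier_subset_hyperplane
    (f j₀).continuous_of_finiteDimensional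
    (convex_iInter₂ fun i _ => convex_halfSpace_ge (f i).isLinear (c i)) h0 hx hxj
  exact hnot V hVo hVne hVU hVM

/-- Let `C = ⋂_{i=1}^k D_i` be an intersection of closed half-spaces
`D_i = {x | c i ≤ f i x}` of `ℝ^n` (nonzero linear forms `f i`) with `0 ∈ interior C`.
If for every nonempty open `V ⊆ U = {x | gauge C x ≠ 0}` the image of `V` under
`Fr x = (gauge C x)⁻¹ • x` is not contained in the hyperplane `M_{j₀} = {x | f j₀ x = c j₀}`,
then the half-space `D_{j₀}` is redundant: `C = ⋂_{i ≠ j₀} D_i`. -/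
theorem redundant_halfspace_of_gauge_frontier
    {n k : ℕ} (f : Fin k → (EuclideanSpace ℝ (Fin n) →ₗ[ℝ] ℝ)) (c : Fin k → ℝ)
    (hf : ∀ i, f i ≠ 0)
    (C : Set (EuclideanSpace ℝ (Fin n))) (hC : C = ⋂ i, {x | c i ≤ f i x})
    (h0 : (0 : EuclideanSpace ℝ (Fin n)) ∈ interior C)
    (j₀ : Fin k)
    (hnot : ∀ V : Set (EuclideanSpace ℝ (Fin n)), IsOpen V → V.Nonempty →
      V ⊆ {x | gauge C x ≠ 0} →
      ¬ ((fun x => (gauge C x)⁻¹ • x) '' V ⊆ {x | f j₀ x = c j₀})) :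
    C = ⋂ i ∈ {i : Fin k | i ≠ j₀}, {x | c i ≤ f i x} :=
  redundant_halfspace_of_gauge_frontier_general f c C hC h0 j₀ hnot
end

section
/- Let E be a finite-dimensional real vector space, λ ∈ E, S ⊆ E a set with λ ∈ S, and h : E → ℝ a linear form such that h(s) ≤ h(λ) for all s ∈ S, with equality if and only if s = λ. Let π : [0,1] → E be continuous with π(1) − π(0) = λ, and suppose there is a subdivision 0 = t_1 < … < t_n = 1 such that on each [t_i, t_{i+1}], π is affine with constant derivative belonging to S. Then π(t) = π(0) + t·λ for all t ∈ [0,1]. -/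
/-!
Telescoping over the subdivision writes `λ = γ 1 - γ 0` as the convex combination
`∑ (t_{i+1} - t_i) • d_i` of the slopes `d_i ∈ S`. Applying `h`, the weighted average of the
values `h d_i ≤ h λ` equals `h λ`, so every slope of positive weight has `h d_i = h λ`, i.e.
`d_i = λ`. A path all of whose pieces have slope `λ` is the straight segment.
-/

open Finset

theorem Fin.sum_univ_succ_sub_castSucc {M : Type*} [AddCommGroup M] {n : ℕ}
    (f : Fin (n + 1) → M) : ∑ i : Fin n, (f i.succ - f i.castSucc) = f (Fin.last n) - f 0 := by
  induction n with
  | zero => simp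
  | succ n ih =>
    have := ih (f ∘ Fin.castSucc)
    simp only [Function.comp_apply, ← Fin.succ_castSucc, Fin.castSucc_zero] at this
    rw [Fin.sum_univ_castSucc, this, ← Fin.succ_last, sub_add_sub_cancel']

theorem LinearMap.eq_of_sum_smul_eq_of_le {ι E : Type*} [AddCommGroup E] [Module ℝ E]
    (h : E →ₗ[ℝ] ℝ) {s : Finset ι} {w : ι → ℝ} {d : ι → E} {l : E} (hw : ∀ i ∈ s, 0 ≤ w i)
    (hw₁ : ∑ i ∈ s, w i = 1) (hsum : ∑ i ∈ s, w i • d i = l) (hle : ∀ i ∈ s, h (d i) ≤ h l)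
    {i : ι} (hi : i ∈ s) (hwi : 0 < w i) : h (d i) = h l := by
  have hgap : ∑ j ∈ s, w j * (h l - h (d j)) = 0 := calc
    _ = (∑ j ∈ s, w j) * h l - h (∑ j ∈ s, w j • d j) := by
      simp [map_sum, mul_sub, sum_sub_distrib, sum_mul]
    _ = 0 := by rw [hw₁, hsum, one_mul, sub_self]
  have hterm := (sum_eq_zero_iff_of_nonneg fun j hj ↦
    mul_nonneg (hw j hj) (sub_nonneg.2 (hle j hj))).1 hgap i hi
  linarith [(mul_eq_zero.1 hterm).resolve_left hwi.ne']

theorem eq_add_sub_smul_of_piecewise {E : Type*} [AddCommGroup E] [Module ℝ E] {n : ℕ}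
    {t : Fin (n + 1) → ℝ} (ht : Monotone t) {γ : ℝ → E} {v : E}
    (hpiece : ∀ i : Fin n, ∀ x ∈ Set.Icc (t i.castSucc) (t i.succ),
      γ x = γ (t i.castSucc) + (x - t i.castSucc) • v) (k : Fin (n + 1)) :
    ∀ x ∈ Set.Icc (t 0) (t k), γ x = γ (t 0) + (x - t 0) • v := by
  induction k using Fin.induction with
  | zero =>
    rintro x ⟨h0, h1⟩
    simp [le_antisymm h1 h0]
  | succ i ih =>
    rintro x ⟨h0, h1⟩
    rcases le_or_gt x (t i.castSucc) with hx | hx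
    · exact ih x ⟨h0, hx⟩
    · rw [hpiece i x ⟨hx.le, h1⟩, ih _ ⟨ht (Fin.zero_le _), le_rfl⟩, add_assoc, ← add_smul,
        sub_add_sub_cancel']

theorem lambda_path_unique_general
    {E : Type*} [NormedAddCommGroup E] [NormedSpace ℝ E]
    (l : E) (S : Set E) (h : E →ₗ[ℝ] ℝ)
    (hle : ∀ s ∈ S, h s ≤ h l) (hiff : ∀ s ∈ S, (h s = h l ↔ s = l))
    (γ : ℝ → E) (hend : γ 1 - γ 0 = l)
    (n : ℕ) (t : Fin (n + 1) → ℝ) (ht : StrictMono t)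
    (ht0 : t 0 = 0) (ht1 : t (Fin.last n) = 1)
    (haff : ∀ i : Fin n, ∃ d ∈ S, ∀ x ∈ Set.Icc (t i.castSucc) (t i.succ),
      γ x = γ (t i.castSucc) + (x - t i.castSucc) • d) :
    ∀ s ∈ Set.Icc (0 : ℝ) 1, γ s = γ 0 + s • l := by
  choose d hdS hpiece using haff
  have hlen : ∀ i : Fin n, 0 < t i.succ - t i.castSucc :=
    fun i ↦ sub_pos.2 (ht Fin.castSucc_lt_succ)
  have hvert : ∀ i : Fin n, γ (t i.succ) - γ (t i.castSucc) = (t i.succ - t i.castSucc) • d i :=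
    fun i ↦ by rw [hpiece i _ ⟨(ht Fin.castSucc_lt_succ).le, le_rfl⟩, add_sub_cancel_left]
  have hw₁ : ∑ i : Fin n, (t i.succ - t i.castSucc) = 1 := by
    rw [Fin.sum_univ_succ_sub_castSucc, ht0, ht1, sub_zero]
  have hsum : ∑ i : Fin n, (t i.succ - t i.castSucc) • d i = l := calc
    _ = ∑ i : Fin n, (γ (t i.succ) - γ (t i.castSucc)) := by simp only [hvert]
    _ = γ (t (Fin.last n)) - γ (t 0) := Fin.sum_univ_succ_sub_castSucc (γ ∘ t)
    _ = l := by rw [ht0, ht1, hend]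
  have hd : ∀ i, d i = l := fun i ↦ (hiff _ (hdS i)).1 <|
    h.eq_of_sum_smul_eq_of_le (fun i _ ↦ (hlen i).le) hw₁ hsum (fun i _ ↦ hle _ (hdS i))
      (mem_univ i) (hlen i)
  simp only [hd] at hpiece
  intro s hs
  simpa [ht0] using
    eq_add_sub_smul_of_piecewise ht.monotone hpiece (Fin.last n) s (by rwa [ht0, ht1])

/-- Let `E` be a finite-dimensional real vector space, `l ∈ E`, `S ⊆ E` with `l ∈ S`, and
`h : E → ℝ` a linear form such that `h s ≤ h l` for all `s ∈ S`, with equality iff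
`s = l`. If `γ : [0,1] → E` is continuous with `γ 1 - γ 0 = l` and piecewise affine with
constant derivative in `S` on each piece of a subdivision `0 = t_1 < … < t_n = 1`, then
`γ s = γ 0 + s • l` for all `s ∈ [0,1]`. -/
theorem lambda_path_unique
    {E : Type*} [NormedAddCommGroup E] [NormedSpace ℝ E] [FiniteDimensional ℝ E]
    (l : E) (S : Set E) (hlS : l ∈ S) (h : E →ₗ[ℝ] ℝ)
    (hle : ∀ s ∈ S, h s ≤ h l) (hiff : ∀ s ∈ S, (h s = h l ↔ s = l))
    (γ : ℝ → E) (hcont : ContinuousOn γ (Set.Icc 0 1)) (hend : γ 1 - γ 0 = l)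
    (n : ℕ) (hn : 0 < n) (t : Fin (n + 1) → ℝ) (ht : StrictMono t)
    (ht0 : t 0 = 0) (ht1 : t (Fin.last n) = 1)
    (haff : ∀ i : Fin n, ∃ d ∈ S, ∀ x ∈ Set.Icc (t i.castSucc) (t i.succ),
      γ x = γ (t i.castSucc) + (x - t i.castSucc) • d) :
    ∀ s ∈ Set.Icc (0 : ℝ) 1, γ s = γ 0 + s • l :=
  lambda_path_unique_general l S h hle hiff γ hend n t ht ht0 ht1 haff
end

section
/- Let E be a finite-dimensional real vector space, C ⊆ E a closed convex set, and A' its affine span. If the relative interior of C (the interior of C in A') is nonempty, x belongs to the relative interior of C, and y ∈ A' \ C, then the segment [x,y] meets the relative frontier of C in exactly one point. -/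
open Set

/-- Characterization of the intrinsic interior via ambient neighborhoods. -/
theorem mem_intrinsicInterior_iff_nhds {E : Type*} [NormedAddCommGroup E] [NormedSpace ℝ E]
    {C : Set E} {z : E} :
    z ∈ intrinsicInterior ℝ C ↔
      z ∈ affineSpan ℝ C ∧ ∃ U ∈ nhds z, U ∩ (affineSpan ℝ C : Set E) ⊆ C := by
  constructor
  · rintro ⟨w, hw, rfl⟩
    refine ⟨w.2, ?_⟩
    rw [mem_interior_iff_mem_nhds, mem_nhds_subtype] at hw
    obtain ⟨U, hU, hUsub⟩ := hw
    refine ⟨U, hU, ?_⟩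
    rintro v ⟨hvU, hvA⟩
    exact hUsub (show (⟨v, hvA⟩ : affineSpan ℝ C) ∈ _ from hvU)
  · rintro ⟨hzA, U, hU, hsub⟩
    refine ⟨⟨z, hzA⟩, ?_, rfl⟩
    rw [mem_interior_iff_mem_nhds, mem_nhds_subtype]
    exact ⟨U, hU, fun v hv => hsub ⟨hv, v.2⟩⟩

/-- Combination of a relative interior point with a point of a convex set lies in the
relative interior. -/
theorem combo_mem_intrinsicInterior {E : Type*} [NormedAddCommGroup E] [NormedSpace ℝ E]
    {C : Set E} (hconv : Convex ℝ C) {z w : E} (hz : z ∈ intrinsicInterior ℝ C) (hw : w ∈ C)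
    {u : ℝ} (hu0 : 0 < u) (hu1 : u < 1) :
    (1 - u) • z + u • w ∈ intrinsicInterior ℝ C := by
  rw [mem_intrinsicInterior_iff_nhds] at hz ⊢
  obtain ⟨hzA, U, hU, hsub⟩ := hz
  have hwA : w ∈ affineSpan ℝ C := subset_affineSpan ℝ C hw
  have h1u : (1 : ℝ) - u ≠ 0 := by linarith
  -- the affine homothety q ↦ (1-u)•q + u•w
  have hmem : (1 - u) • z + u • w ∈ affineSpan ℝ C := by
    have := AffineSubspace.smul_vsub_vadd_mem (affineSpan ℝ C) (1 - u) hzA hwA hwA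
    convert this using 1
    simp [vsub_eq_sub, vadd_eq_add]
    module
  refine ⟨hmem, (fun q => (1 - u) • q + u • w) '' U, ?_, ?_⟩
  · -- image of a nhd under the homothety homeomorphism
    have hhomeo : IsOpenMap (fun q : E => (1 - u) • q + u • w) := by
      have : (fun q : E => (1 - u) • q + u • w)
          = (fun q : E => q + u • w) ∘ (fun q : E => (1 - u) • q) := by
        ext q; simp
      rw [this]
      exact (isOpenMap_add_right (u • w)).comp (isOpenMap_smul₀ h1u)
    obtain ⟨V, hVU, hVopen, hzV⟩ := mem_nhds_iff.1 hU
    rw [mem_nhds_iff]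
    exact ⟨(fun q => (1 - u) • q + u • w) '' V, image_mono hVU, hhomeo V hVopen,
      ⟨z, hzV, rfl⟩⟩
  · rintro v ⟨⟨q, hqU, rfl⟩, hvA⟩
    -- q is an affine combination of (1-u)•q + u•w and w, so q ∈ affineSpan C
    have hqA : q ∈ affineSpan ℝ C := by
      have := AffineSubspace.smul_vsub_vadd_mem (affineSpan ℝ C) (1 - u)⁻¹ hvA hwA hwA
      convert this using 1
      simp only [vsub_eq_sub, vadd_eq_add]
      match_scalars <;> field_simp <;> ring
    have hqC : q ∈ C := hsub ⟨hqU, hqA⟩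
    have := hconv hqC hw (by linarith : (0:ℝ) ≤ 1 - u) hu0.le (by ring)
    simpa using this

/-- Let `E` be a finite-dimensional real vector space and `C ⊆ E` a closed convex set with
nonempty relative interior. If `x` lies in the relative interior of `C` and
`y ∈ affineSpan C \ C`, then there is a unique `t ∈ (0,1]` such that `(1-t)•x + t•y` lies
in the relative frontier of `C`, and `(1-s)•x + s•y` lies in the relative interior of `C`
for all `0 ≤ s < t`. -/
theorem segment_meets_relative_frontier_once
    {E : Type*} [NormedAddCommGroup E] [NormedSpace ℝ E] [FiniteDimensional ℝ E]
    (C : Set E) (hclosed : IsClosed C) (hconv : Convex ℝ C)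
    (x : E) (hx : x ∈ intrinsicInterior ℝ C)
    (y : E) (hyA : y ∈ affineSpan ℝ C) (hyC : y ∉ C) :
    ∃ t : ℝ, t ∈ Set.Ioc (0 : ℝ) 1 ∧
      (1 - t) • x + t • y ∈ intrinsicFrontier ℝ C ∧
      (∀ s : ℝ, 0 ≤ s → s < t → (1 - s) • x + s • y ∈ intrinsicInterior ℝ C) ∧
      ∀ t' : ℝ, t' ∈ Set.Ioc (0 : ℝ) 1 →
        (1 - t') • x + t' • y ∈ intrinsicFrontier ℝ C → t' = t := by
  set f : ℝ → E := fun s => (1 - s) • x + s • y with hf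
  have hxC : x ∈ C := intrinsicInterior_subset hx
  have hxA : x ∈ affineSpan ℝ C := subset_affineSpan ℝ C hxC
  have hfA : ∀ s, f s ∈ affineSpan ℝ C := by
    intro s
    have := AffineSubspace.smul_vsub_vadd_mem (affineSpan ℝ C) s hyA hxA hxA
    convert this using 1
    simp only [hf, vsub_eq_sub, vadd_eq_add]
    module
  have hf_cont : Continuous f := by fun_prop
  have hf0 : f 0 = x := by simp [hf]
  have hf1 : f 1 = y := by simp [hf]
  set T : Set ℝ := {s | s ∈ Icc (0:ℝ) 1 ∧ f s ∈ C} with hT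
  have hT_closed : IsClosed T := (isClosed_Icc.preimage continuous_id).inter (hclosed.preimage hf_cont)
  have h0T : (0:ℝ) ∈ T := ⟨⟨le_refl 0, zero_le_one⟩, by rwa [hf0]⟩
  have hT_bdd : BddAbove T := ⟨1, fun s hs => hs.1.2⟩
  set t := sSup T with ht
  have htT : t ∈ T := hT_closed.csSup_mem ⟨0, h0T⟩ hT_bdd
  have ht1 : t ≤ 1 := htT.1.2
  have ht0 : 0 ≤ t := le_csSup hT_bdd h0T
  have htC : f t ∈ C := htT.2
  -- t < 1
  have htlt1 : t < 1 := by
    rcases lt_or_eq_of_le ht1 with h | h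
    · exact h
    · exact absurd (h ▸ htC) (by rwa [hf1])
  -- positivity: eventually near any intrinsic-interior parameter, f s ∈ C
  have key_nhds : ∀ r : ℝ, f r ∈ intrinsicInterior ℝ C → ∀ᶠ s in nhds r, f s ∈ C := by
    intro r hr
    rw [mem_intrinsicInterior_iff_nhds] at hr
    obtain ⟨-, U, hU, hsub⟩ := hr
    filter_upwards [hf_cont.continuousAt.preimage_mem_nhds hU] with s hs
    exact hsub ⟨hs, hfA s⟩
  have ht_pos : 0 < t := by
    have h := key_nhds 0 (by rwa [hf0])
    have h2 : ∀ᶠ s in nhds (0:ℝ), s < 1 := Filter.Tendsto.eventually_lt_const one_pos Filter.tendsto_id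
    have h3 : ∀ᶠ s in nhdsWithin 0 (Ioi (0:ℝ)), f s ∈ C ∧ s < 1 :=
      (h.and h2).filter_mono nhdsWithin_le_nhds
    obtain ⟨s, ⟨hsC, hs1⟩, hs0⟩ := (h3.and eventually_mem_nhdsWithin).exists
    calc (0:ℝ) < s := hs0
    _ ≤ t := le_csSup hT_bdd ⟨⟨hs0.le, hs1.le⟩, hsC⟩
  -- interior points for 0 ≤ s < t
  have h_int : ∀ s : ℝ, 0 ≤ s → s < t → f s ∈ intrinsicInterior ℝ C := by
    intro s hs0 hst
    rcases eq_or_lt_of_le hs0 with h | h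
    · rw [← h, hf0]; exact hx
    · have hu0 : 0 < s / t := div_pos h ht_pos
      have hu1 : s / t < 1 := (div_lt_one ht_pos).2 hst
      have := combo_mem_intrinsicInterior hconv hx htC hu0 hu1
      convert this using 1
      simp only [hf]
      have htne : t ≠ 0 := ht_pos.ne'
      match_scalars <;> field_simp <;> ring
  -- f t not in the intrinsic interior
  have h_not_int : f t ∉ intrinsicInterior ℝ C := by
    intro hin
    have h := key_nhds t hin
    have h2 : ∀ᶠ s in nhds t, s < 1 := Filter.Tendsto.eventually_lt_const htlt1 Filter.tendsto_id
    have h3 : ∀ᶠ s in nhdsWithin t (Ioi t), f s ∈ C ∧ s < 1 :=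
      (h.and h2).filter_mono nhdsWithin_le_nhds
    obtain ⟨s, ⟨hsC, hs1⟩, hst⟩ := (h3.and eventually_mem_nhdsWithin).exists
    have : s ≤ t := le_csSup hT_bdd ⟨⟨ht_pos.le.trans (le_of_lt hst), hs1.le⟩, hsC⟩
    exact absurd hst (not_lt.2 this)
  have h_front : f t ∈ intrinsicFrontier ℝ C := by
    rw [← closure_diff_intrinsicInterior]
    exact ⟨subset_closure htC, h_not_int⟩
  refine ⟨t, ⟨ht_pos, ht1⟩, h_front, h_int, ?_⟩
  intro t' ht' hfront'
  rw [← closure_diff_intrinsicInterior, hclosed.closure_eq] at hfront'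
  obtain ⟨hC', hnotint'⟩ := hfront'
  have ht'le : t' ≤ t := le_csSup hT_bdd ⟨⟨ht'.1.le, ht'.2⟩, hC'⟩
  rcases lt_or_eq_of_le ht'le with h | h
  · exact absurd (h_int t' ht'.1.le h) hnotint'
  · exact h
end

section
/- Let T be a nonempty open convex cone in ℝ^n and ν ∈ T. Let x ∈ ℝ^n, u ∈ ℝ^n, and suppose a, a + u lie in a convex set V such that for all pairs v, v' ∈ V one has v + k·ν − v' ∈ closure(T) for some fixed k ≥ 0. If λ : V → ℝ is a function with the property that for all v ∈ V, v + λ(v)·ν ∈ closure of a set S satisfying: whenever p, q ∈ S and q − p ∈ closure(T), the segment [p,q] ⊆ S; and λ(V) ≤ M, then λ(a + t·u) ≤ (1−t)·λ(a) + t·(M + k) for all t ∈ [0,1]. -/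
/-- Convexity estimate for the height function: let `T` be a nonempty open convex cone in
`ℝ^n` and `ν ∈ T`. Let `V` be a convex set containing `a` and `a + u` such that
`v + k • ν - v' ∈ closure T` for all `v, v' ∈ V` (for a fixed `k ≥ 0`). Let `S` be
order-convex for the preorder `p ≤ q ↔ q - p ∈ closure T`, closed under adding
`ℝ_{≥0} • ν`, and let `lam` be the height function of `S` in direction `ν`
(`v + lam v • ν ∈ S`, minimal such), bounded by `M` on `V`. Then
`lam (a + t • u) ≤ (1 - t) * lam a + t * (M + k)` for all `t ∈ [0,1]`. -/
theorem height_function_convexity_estimate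
    {n : ℕ} (T : Set (EuclideanSpace ℝ (Fin n))) (hTopen : IsOpen T)
    (hTadd : ∀ x ∈ T, ∀ y ∈ T, x + y ∈ T)
    (hTsmul : ∀ r : ℝ, 0 < r → ∀ x ∈ T, r • x ∈ T)
    (ν : EuclideanSpace ℝ (Fin n)) (hν : ν ∈ T)
    (V : Set (EuclideanSpace ℝ (Fin n))) (hVconv : Convex ℝ V)
    (a u : EuclideanSpace ℝ (Fin n)) (ha : a ∈ V) (hau : a + u ∈ V)
    (k : ℝ) (hk : 0 ≤ k)
    (hVcomp : ∀ v ∈ V, ∀ v' ∈ V, v + k • ν - v' ∈ closure T)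
    (S : Set (EuclideanSpace ℝ (Fin n)))
    (hSorder : ∀ p ∈ S, ∀ q ∈ S, q - p ∈ closure T → segment ℝ p q ⊆ S)
    (hSray : ∀ p ∈ S, ∀ r : ℝ, 0 ≤ r → p + r • ν ∈ S)
    (lam : EuclideanSpace ℝ (Fin n) → ℝ)
    (hlamS : ∀ v ∈ V, v + lam v • ν ∈ S)
    (hlammin : ∀ v ∈ V, ∀ s : ℝ, v + s • ν ∈ S → lam v ≤ s)
    (M : ℝ) (hM : ∀ v ∈ V, lam v ≤ M) :
    ∀ t ∈ Set.Icc (0 : ℝ) 1, lam (a + t • u) ≤ (1 - t) * lam a + t * (M + k) := by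
  intro t ht
  obtain ⟨ht0, ht1⟩ := ht
  set p := a + lam a • ν with hp
  set q := (a + u) + (M + k) • ν with hq
  have hpS : p ∈ S := hlamS a ha
  have hlamu : lam (a + u) ≤ M := hM _ hau
  have hqS : q ∈ S := by
    have := hSray _ (hlamS _ hau) (M + k - lam (a + u)) (by linarith)
    have heq : (a + u) + lam (a + u) • ν + (M + k - lam (a + u)) • ν = q := by
      rw [hq]; module
    rwa [heq] at this
  have hsub : q - p ∈ closure T := by
    have h1 : u + k • ν ∈ closure T := by
      have h0 := hVcomp _ hau _ ha
      have he : a + u + k • ν - a = u + k • ν := by module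
      rwa [he] at h0
    have hla : lam a ≤ M := hM a ha
    rcases eq_or_lt_of_le hla with h | h
    · have heq : q - p = u + k • ν := by rw [hq, hp, ← h]; module
      rwa [heq]
    · have h2 : (M - lam a) • ν ∈ T := hTsmul _ (by linarith) _ hν
      have heq : q - p = (M - lam a) • ν + (u + k • ν) := by rw [hq, hp]; module
      rw [heq]
      exact map_mem_closure (continuous_add_left _) h1
        (fun z hz => hTadd _ h2 z hz)
  have hseg : (1 - t) • p + t • q ∈ S := by
    apply hSorder p hpS q hqS hsub
    exact ⟨1 - t, t, by linarith, ht0, by ring, rfl⟩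
  have heq : (1 - t) • p + t • q = (a + t • u) + ((1 - t) * lam a + t * (M + k)) • ν := by
    rw [hp, hq]; module
  rw [heq] at hseg
  have hmemV : a + t • u ∈ V := by
    have := hVconv ha hau (by linarith : (0:ℝ) ≤ 1 - t) ht0 (by ring)
    have he : (1 - t) • a + t • (a + u) = a + t • u := by module
    rwa [he] at this
  exact hlammin _ hmemV _ hseg
end
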